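/- Fix γ ∈ (0,1) and μ > 0 with μ ≠ 1, and set k := ⌊1/μ⌋ and γ_c(μ) := (k/(k+1))·(1 − μ/(2 − kμ)). Let g be the concave traveling wave with speed v, support [L,0] and phenotypic threshold s. Define the reproduction profile r(x) = π[ 1 − γ + sup_{y∈ℝ} ( g(y) − |x − y| ) ] and let g_1(x) = g(x − v) be the genotypic profile after one step of the dynamic. Then: if γ < γ_c(μ), one has r(x) > g_1(x) for every x in the support of g_1 (i.e. for every x with g_1(x) ≥ 0); and if γ > γ_c(μ), one has r(x) = g_1(x) for every x ∈ [s, v], an interval containing the right edge v of the support of g_1. -/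

import Mathlib

/-- `π(x) = x` if `x ≥ 0`, and `−∞` otherwise. -/
noncomputable def piE (x : EReal) : EReal := if 0 ≤ x then x else ⊥

/-- Concavity for `ℝ ∪ {−∞}`-valued functions (modeled as `ℝ → EReal`). -/
def ConcaveE (h : ℝ → EReal) : Prop :=
  ∀ x x' t : ℝ, 0 ≤ t → t ≤ 1 →
    ((t : EReal) * h x + ((1 - t : ℝ) : EReal) * h x') ≤ h (t * x + (1 - t) * x')

/-- `Φ_ξ[g](x) = 1 − γ + sup_y ( g(y) − |x − y| ) − μ·max(ξ − x, 0)`. -/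
noncomputable def Phi (γ μ : ℝ) (g : ℝ → EReal) (ξ x : ℝ) : EReal :=
  ((1 - γ : ℝ) : EReal) + (⨆ y : ℝ, g y - ((|x - y| : ℝ) : EReal))
    - ((μ * max (ξ - x) 0 : ℝ) : EReal)

/-- The phenotypic threshold `s = sup{ ξ ∈ ℝ : sup_x Φ_ξ[g](x) ≥ γ }`. -/
noncomputable def sNext (γ μ : ℝ) (g : ℝ → EReal) : ℝ :=
  sSup {ξ : ℝ | (γ : EReal) ≤ ⨆ x : ℝ, Phi γ μ g ξ x}

/-- The deterministic dynamic: `g_n = π ∘ Φ_{s_n}[g_{n−1}]` with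
`s_n = sNext γ μ g_{n−1}`. -/
noncomputable def gIter (γ μ : ℝ) (g0 : ℝ → EReal) : ℕ → ℝ → EReal
  | 0 => g0
  | n + 1 => fun x =>
      piE (Phi γ μ (gIter γ μ g0 n) (sNext γ μ (gIter γ μ g0 n)) x)

/-- A concave `g` with `sup{x : g x > 0} = 0`, `L = inf{x : g x > 0} > −∞`
(and `g = −∞` outside `[L,0]`) is a traveling wave with speed `v` if the
dynamic has the effect of shifting `g` by `v` at every step. -/
def IsTravelingWave (γ μ : ℝ) (g : ℝ → EReal) (v L : ℝ) : Prop :=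
  ConcaveE g ∧
  {x : ℝ | 0 < g x}.Nonempty ∧
  BddBelow {x : ℝ | 0 < g x} ∧
  sSup {x : ℝ | 0 < g x} = 0 ∧
  sInf {x : ℝ | 0 < g x} = L ∧
  (∀ x : ℝ, x ∉ Set.Icc L 0 → g x = ⊥) ∧
  (∀ n : ℕ, 1 ≤ n → ∀ x : ℝ, gIter γ μ g n x = g (x - n * v))

/-- `k = ⌊1/μ⌋`. -/
noncomputable def kFl (μ : ℝ) : ℤ := ⌊1 / μ⌋

/-- The critical selection strength `γ_c(μ) = (k/(k+1))·(1 − μ/(2 − kμ))`. -/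
noncomputable def gammaC (μ : ℝ) : ℝ :=
  ((kFl μ : ℝ) / ((kFl μ : ℝ) + 1)) * (1 - μ / (2 - (kFl μ : ℝ) * μ))

/-- The reproduction profile `r(x) = π[ 1 − γ + sup_y ( g(y) − |x − y| ) ]`. -/
noncomputable def reprofile (γ : ℝ) (g : ℝ → EReal) (x : ℝ) : EReal :=
  piE (((1 - γ : ℝ) : EReal) + ⨆ y : ℝ, g y - ((|x - y| : ℝ) : EReal))

/-!
Suppose `γ < γ_c(μ)` but `s ≤ v`. Start at a point `z` close to the right edge `0` where `g` is
positive and follow the orbit `z, z − v, …, z − k v` with `k = ⌊1/μ⌋`: every step gains `1 − γ`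
by reproduction and loses at most `μ ((j + 1) v − z)` to selection, and `v ≤ 1 − γ`, so after
`k` steps the wave exceeds `γ`. But `g ≤ γ` everywhere, since `sup Φ_s[g] ≤ γ` by the choice of
the threshold. Hence `x ≤ v < s` on the support of `g₁`, so the selection penalty in
`g₁ = π ∘ Φ_s[g]` is strictly positive there. For `x ≥ s` there is no penalty and `g₁ = r`.
-/

open Set

lemma piE_of_nonneg {t : EReal} (h : 0 ≤ t) : piE t = t := if_pos h

lemma piE_le (t : EReal) : piE t ≤ t := by
  unfold piE
  split_ifs <;> simp

lemma nonneg_of_zero_le_piE {t : EReal} (h : 0 ≤ piE t) : 0 ≤ t := by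
  by_contra ht
  rw [piE, if_neg ht] at h
  exact ht (h.trans bot_le)

lemma le_piE {b t : EReal} (hb : 0 ≤ b) (h : b ≤ t) : b ≤ piE t := by
  rwa [piE_of_nonneg (hb.trans h)]

noncomputable def supConv (g : ℝ → EReal) (x : ℝ) : EReal :=
  ⨆ y : ℝ, g y - ((|x - y| : ℝ) : EReal)

lemma supConv_le_coe_iff {g : ℝ → EReal} {x a : ℝ} :
    supConv g x ≤ a ↔ ∀ y, g y ≤ ((a + |x - y| : ℝ) : EReal) := by
  refine iSup_le_iff.trans (forall_congr' fun y => ?_)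
  rw [EReal.sub_le_iff_le_add (.inl (EReal.coe_ne_bot _)) (.inl (EReal.coe_ne_top _)),
    EReal.coe_add]

lemma le_of_supConv_eq {g : ℝ → EReal} {x a : ℝ} (hx : supConv g x = a) (y : ℝ) :
    g y ≤ ((a + |x - y| : ℝ) : EReal) :=
  supConv_le_coe_iff.1 hx.le y

lemma le_sub_of_nonpos {g : ℝ → EReal} {a : ℝ} (h0 : supConv g 0 = a) {y : ℝ} (hy : y ≤ 0) :
    g y ≤ ((a - y : ℝ) : EReal) := by
  simpa [abs_of_nonpos hy, sub_eq_add_neg] using le_of_supConv_eq h0 y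

lemma Phi_eq_coe {γ μ ξ x a : ℝ} {g : ℝ → EReal} (hx : supConv g x = a) :
    Phi γ μ g ξ x = ((1 - γ + a - μ * max (ξ - x) 0 : ℝ) : EReal) := by
  change ((1 - γ : ℝ) : EReal) + supConv g x - _ = _
  rw [hx]
  norm_cast

lemma reprofile_eq_piE_Phi {γ μ ξ x : ℝ} {g : ℝ → EReal} (hx : ξ ≤ x) :
    reprofile γ g x = piE (Phi γ μ g ξ x) := by
  rw [Phi, max_eq_right (by linarith), mul_zero, EReal.coe_zero, sub_zero, reprofile]

lemma exists_nat_lt_of_lt_gammaC {γ μ : ℝ} (hμ : 0 < μ) (h : γ < gammaC μ) :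
    ∃ k : ℕ, γ < (1 - γ) * (k * (2 - (k + 1) * μ) / 2) := by
  have hk0 : 0 ≤ kFl μ := Int.floor_nonneg.2 (by positivity)
  refine ⟨(kFl μ).toNat, ?_⟩
  have hcast : ((kFl μ).toNat : ℝ) = kFl μ := by exact_mod_cast Int.toNat_of_nonneg hk0
  rw [hcast]
  have hk : (0 : ℝ) ≤ kFl μ := by exact_mod_cast hk0
  have hkμ : (kFl μ : ℝ) * μ ≤ 1 := (le_div_iff₀ hμ).1 (Int.floor_le (1 / μ))
  rw [gammaC] at h
  generalize (kFl μ : ℝ) = k at *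
  have hne : 2 - k * μ ≠ 0 := by linarith
  have hD : 0 < (k + 1) * (2 - k * μ) := by nlinarith
  -- `γ_c(μ) = A / (1 + A)` with `A = k (2 - (k + 1) μ) / 2`
  have hγc : k / (k + 1) * (1 - μ / (2 - k * μ)) * ((k + 1) * (2 - k * μ)) =
      k * (2 - (k + 1) * μ) := by
    field_simp
    ring
  nlinarith [mul_lt_mul_of_pos_right h hD]

namespace IsTravelingWave

variable {γ μ v L : ℝ} {g : ℝ → EReal} (hg : IsTravelingWave γ μ g v L)
include hg

theorem piE_Phi_sNext (x : ℝ) : piE (Phi γ μ g (sNext γ μ g) x) = g (x - v) := by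
  simpa [gIter] using hg.2.2.2.2.2.2 1 le_rfl x

theorem eq_bot_of_notMem {y : ℝ} (hy : y ∉ Icc L 0) : g y = ⊥ :=
  hg.2.2.2.2.2.1 y hy

theorem nonpos_of_nonneg {y : ℝ} (hy : 0 ≤ g y) : y ≤ 0 := by
  by_contra hpos
  rw [hg.eq_bot_of_notMem fun hm => hpos hm.2] at hy
  simp at hy

theorem exists_pos_mem_Ioc {ε : ℝ} (hε : 0 < ε) : ∃ z ∈ Ioc (-ε) 0, 0 < g z := by
  have hlt : -ε < sSup {x : ℝ | 0 < g x} := hg.2.2.2.1 ▸ neg_lt_zero.2 hε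
  obtain ⟨z, hz, hεz⟩ := exists_lt_of_lt_csSup hg.2.1 hlt
  exact ⟨z, ⟨hεz, hg.nonpos_of_nonneg (le_of_lt hz)⟩, hz⟩

theorem le_Phi_sNext_add (z : ℝ) : g z ≤ Phi γ μ g (sNext γ μ g) (z + v) := by
  simpa only [add_sub_cancel_right] using (hg.piE_Phi_sNext (z + v)).symm.trans_le (piE_le _)

theorem reprofile_eq {x : ℝ} (hx : sNext γ μ g ≤ x) : reprofile γ g x = g (x - v) := by
  rw [reprofile_eq_piE_Phi (μ := μ) hx, hg.piE_Phi_sNext]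

theorem exists_supConv_eq_coe : ∃ h : ℝ → ℝ, ∀ x, supConv g x = h x := by
  have hbot : ∀ x, supConv g x ≠ ⊥ := by
    obtain ⟨y, hy⟩ := hg.2.1
    intro x hx
    have := (supConv_le_coe_iff (a := -|x - y| - 1)).1 (hx.trans_le bot_le) y
    rw [show -|x - y| - 1 + |x - y| = (-1 : ℝ) by ring] at this
    exact absurd (hy.trans_le this) (by norm_num)
  -- `g 1 = ⊥` rules out `supConv g (v + 1) = ⊤`, and `supConv g` is `1`-Lipschitz.
  have htop : supConv g (v + 1) ≠ ⊤ := by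
    intro htop
    have hPhi : Phi γ μ g (sNext γ μ g) (v + 1) = ⊤ := by
      change ((1 - γ : ℝ) : EReal) + supConv g (v + 1) - _ = ⊤
      rw [htop, EReal.coe_add_top, EReal.top_sub_coe]
    have h1 := hg.piE_Phi_sNext (v + 1)
    rw [hPhi, piE_of_nonneg le_top, add_sub_cancel_left,
      hg.eq_bot_of_notMem fun hm => absurd hm.2 (by norm_num)] at h1
    exact top_ne_bot h1
  obtain ⟨a, ha⟩ : ∃ a : ℝ, supConv g (v + 1) = a := ⟨_, (EReal.coe_toReal htop (hbot _)).symm⟩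
  have hle : ∀ x, supConv g x ≤ ((a + |x - (v + 1)| : ℝ) : EReal) := fun x =>
    supConv_le_coe_iff.2 fun y => (le_of_supConv_eq ha y).trans <| EReal.coe_le_coe_iff.2 <| by
      linarith [abs_sub_le (v + 1) x y, abs_sub_comm (v + 1) x]
  exact ⟨fun x => (supConv g x).toReal, fun x =>
    (EReal.coe_toReal (ne_top_of_le_ne_top (EReal.coe_ne_top _) (hle x)) (hbot x)).symm⟩

section RealProfile

variable {h : ℝ → ℝ} (hh : ∀ x, supConv g x = h x)
include hh

theorem apply_sub_eq_piE_coe (x : ℝ) :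
    g (x - v) = piE ((1 - γ + h x - μ * max (sNext γ μ g - x) 0 : ℝ) : EReal) := by
  rw [← hg.piE_Phi_sNext, Phi_eq_coe (hh x)]

theorem supConv_le_of_forall_mem_Icc {x a : ℝ}
    (H : ∀ y ∈ Icc L 0, g y ≤ ((a + |x - y| : ℝ) : EReal)) : h x ≤ a := by
  rw [← EReal.coe_le_coe_iff, ← hh x, supConv_le_coe_iff]
  intro y
  by_cases hy : y ∈ Icc L 0
  · exact H y hy
  · simp [hg.eq_bot_of_notMem hy]

theorem supConv_le_sub_self (x : ℝ) : h x ≤ h 0 - x :=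
  hg.supConv_le_of_forall_mem_Icc hh fun y hy => (le_sub_of_nonpos (hh 0) hy.2).trans <|
    EReal.coe_le_coe_iff.2 (by linarith [le_abs_self (x - y)])

theorem supConv_le_sub_left_edge (x : ℝ) : h x ≤ h 0 - L :=
  hg.supConv_le_of_forall_mem_Icc hh fun y hy => (le_sub_of_nonpos (hh 0) hy.2).trans <|
    EReal.coe_le_coe_iff.2 (by linarith [hy.1, abs_nonneg (x - y)])

theorem bddAbove_threshold (hμ : 0 < μ) :
    BddAbove {ξ : ℝ | (γ : EReal) ≤ ⨆ x : ℝ, Phi γ μ g ξ x} := by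
  set t := min μ 1
  have ht : 0 < t := lt_min hμ one_pos
  refine ⟨(1 - 2 * γ + h 0 - (1 - t) * L) / t, fun ξ hξ => ?_⟩
  -- interpolate between the two bounds `h x ≤ h 0 - x` and `h x ≤ h 0 - L` with weight `t`
  have hbound : ∀ x, 1 - γ + h x - μ * max (ξ - x) 0 ≤ 1 - γ + h 0 - (1 - t) * L - t * ξ := by
    intro x
    have h1 := mul_le_mul_of_nonneg_left (hg.supConv_le_sub_self hh x) ht.le
    have h2 := mul_le_mul_of_nonneg_left (hg.supConv_le_sub_left_edge hh x) (sub_nonneg.2 (min_le_right μ 1))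
    have h3 : t * (ξ - x) ≤ μ * max (ξ - x) 0 :=
      (mul_le_mul_of_nonneg_left (le_max_left _ _) ht.le).trans
        (mul_le_mul_of_nonneg_right (min_le_left _ _) (le_max_right _ _))
    nlinarith
  have hγξ : (γ : EReal) ≤ ((1 - γ + h 0 - (1 - t) * L - t * ξ : ℝ) : EReal) :=
    hξ.trans (iSup_le fun x => (Phi_eq_coe (hh x)).le.trans (EReal.coe_le_coe_iff.2 (hbound x)))
  rw [le_div_iff₀ ht]
  linarith [EReal.coe_le_coe_iff.1 hγξ]

theorem le_gamma_of_threshold (hμ : 0 < μ) (x : ℝ) :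
    1 - γ + h x - μ * max (sNext γ μ g - x) 0 ≤ γ := by
  refine le_of_forall_pos_lt_add fun ε hε => ?_
  have hδ : 0 < ε / μ := div_pos hε hμ
  have hnot : ¬ (γ : EReal) ≤ ⨆ x : ℝ, Phi γ μ g (sNext γ μ g + ε / μ) x := fun hmem =>
    by linarith [le_csSup (hg.bddAbove_threshold hh hμ) hmem, show sNext γ μ g = sSup _ from rfl]
  have hlt : 1 - γ + h x - μ * max (sNext γ μ g + ε / μ - x) 0 < γ :=
    EReal.coe_lt_coe_iff.1 (((Phi_eq_coe (hh x)).symm.le.trans (le_iSup _ x)).trans_lt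
      (not_le.1 hnot))
  have hmax : max (sNext γ μ g + ε / μ - x) 0 ≤ max (sNext γ μ g - x) 0 + ε / μ :=
    max_le (by linarith [le_max_left (sNext γ μ g - x) 0])
      (by linarith [le_max_right (sNext γ μ g - x) 0])
  have : μ * (ε / μ) = ε := mul_div_cancel₀ ε hμ.ne'
  nlinarith [mul_le_mul_of_nonneg_left hmax hμ.le]

theorem le_gamma (hμ : 0 < μ) (z : ℝ) : g z ≤ γ :=
  ((hg.le_Phi_sNext_add z).trans_eq (Phi_eq_coe (hh _))).trans (EReal.coe_le_coe_iff.2 (hg.le_gamma_of_threshold hh hμ _))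

theorem speed_le (hμ : 0 < μ) : v ≤ 1 - γ := by
  have : h 0 ≤ 1 - γ + h 0 - v := hg.supConv_le_of_forall_mem_Icc hh fun y hy =>
    ((hg.le_Phi_sNext_add y).trans_eq (Phi_eq_coe (hh _))).trans <| EReal.coe_le_coe_iff.2 <| by
      linarith [hg.supConv_le_sub_self hh (y + v), le_abs_self (0 - y),
        mul_nonneg hμ.le (le_max_right (sNext γ μ g - (y + v)) 0)]
  linarith

theorem speed_pos (hγ : γ < 1) (hsv : sNext γ μ g ≤ v) : 0 < v := by
  by_contra! hv
  obtain ⟨y, ⟨hy, hy0⟩, hgy⟩ := hg.exists_pos_mem_Ioc (ε := (1 - γ) / 2) (by linarith)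
  set x := y + (1 - γ) / 2 with hx
  have hhx : 0 < h x + (1 - γ) / 2 := by
    have := hgy.trans_le (le_of_supConv_eq (hh x) y)
    rwa [show x - y = (1 - γ) / 2 by ring, abs_of_pos (by linarith), EReal.coe_pos] at this
  have hnonneg : 0 ≤ g (x - v) := by
    rw [hg.apply_sub_eq_piE_coe hh x, max_eq_right (by linarith [hx]), mul_zero, sub_zero]
    exact le_piE le_rfl (EReal.coe_nonneg.2 (by linarith))
  linarith [hg.nonpos_of_nonneg hnonneg, hx]

theorem le_shift {z b b' : ℝ} (hb : (b : EReal) ≤ g z) (hb' : 0 ≤ b')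
    (hbb : b' ≤ 1 - γ + b - μ * max (sNext γ μ g - z) 0) : (b' : EReal) ≤ g (z - v) := by
  have hbz : b ≤ h z := by
    simpa using EReal.coe_le_coe_iff.1 (hb.trans (le_of_supConv_eq (hh z) z))
  rw [hg.apply_sub_eq_piE_coe hh z]
  exact le_piE (EReal.coe_nonneg.2 hb') (EReal.coe_le_coe_iff.2 (by linarith))

/-- Along the orbit `z - n v` the wave gains `1 - γ` per step and loses at most
`μ ((j + 1) v - z)` to selection at step `j`. The hypothesis is that the average gain of the
first `n` steps is nonnegative; it decreases with `n`, so no partial sum is cut off by `π`. -/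
theorem le_orbit (hμ : 0 < μ) (hv : 0 ≤ v) (hsv : sNext γ μ g ≤ v) {z : ℝ} (hz : z ≤ 0)
    (hgz : 0 ≤ g z) (n : ℕ) (hn : 0 ≤ 1 - γ + μ * z - μ * v * (n + 1) / 2) :
    ((n * (1 - γ + μ * z - μ * v * (n + 1) / 2) : ℝ) : EReal) ≤ g (z - n * v) := by
  induction n with
  | zero => simpa using hgz
  | succ n ih =>
    rw [Nat.cast_succ] at hn ⊢
    have hμv := mul_nonneg hμ.le hv
    have hrate : 0 ≤ 1 - γ + μ * z - μ * v * (n + 1) / 2 := by nlinarith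
    have hpen : max (sNext γ μ g - (z - n * v)) 0 ≤ (n + 1) * v - z :=
      max_le (by linarith) (by nlinarith [n.cast_nonneg (α := ℝ)])
    have := hg.le_shift hh (ih hrate)
      (b' := (n + 1) * (1 - γ + μ * z - μ * v * (n + 1 + 1) / 2)) (mul_nonneg (by positivity) hn)
      (by nlinarith [mul_le_mul_of_nonneg_left hpen hμ.le])
    rwa [sub_sub, ← add_one_mul] at this

end RealProfile

theorem gammaC_le_of_sNext_le (hγ : γ ∈ Ioo 0 1) (hμ : 0 < μ) (hsv : sNext γ μ g ≤ v) :
    gammaC μ ≤ γ := by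
  by_contra! hlt
  obtain ⟨k, hk⟩ := exists_nat_lt_of_lt_gammaC hμ hlt
  obtain ⟨h, hh⟩ := hg.exists_supConv_eq_coe
  have hv1 := hg.speed_le hh hμ
  have hv0 := hg.speed_pos hh hγ.2 hsv
  set m := (1 - γ) * (k * (2 - (k + 1) * μ) / 2) - γ with hm_def
  have hm : 0 < m := by linarith
  obtain ⟨z, ⟨hz, hz0⟩, hgz⟩ := hg.exists_pos_mem_Ioc (ε := m / (k * μ + 1)) (by positivity)
  have hkμz : -m < k * μ * z := by
    have := (div_lt_iff₀ (by positivity)).1 (neg_div _ m ▸ hz)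
    nlinarith
  have hB : γ < k * (1 - γ + μ * z - μ * v * (k + 1) / 2) := by
    nlinarith [mul_le_mul_of_nonneg_left hv1 (by positivity : (0 : ℝ) ≤ k * μ * (k + 1) / 2), hm_def]
  have hrate : 0 ≤ 1 - γ + μ * z - μ * v * (k + 1) / 2 := by
    by_contra! hneg
    nlinarith [mul_nonpos_of_nonneg_of_nonpos k.cast_nonneg (α := ℝ) hneg.le, hγ.1]
  have := (hg.le_orbit hh hμ hv0.le hsv hz0 hgz.le k hrate).trans (hg.le_gamma hh hμ _)
  linarith [EReal.coe_le_coe_iff.1 this]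

theorem shift_lt_reprofile (hμ : 0 < μ) {x : ℝ} (hxs : x < sNext γ μ g) (hx : 0 ≤ g (x - v)) :
    g (x - v) < reprofile γ g x := by
  obtain ⟨h, hh⟩ := hg.exists_supConv_eq_coe
  have hpen : 0 < μ * max (sNext γ μ g - x) 0 := mul_pos hμ (lt_max_of_lt_left (by linarith))
  rw [hg.apply_sub_eq_piE_coe hh x] at hx ⊢
  have hp := nonneg_of_zero_le_piE hx
  change _ < piE (((1 - γ : ℝ) : EReal) + supConv g x)
  rw [piE_of_nonneg hp, hh x, ← EReal.coe_add,
    piE_of_nonneg (hp.trans (EReal.coe_le_coe_iff.2 (by linarith)))]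
  exact EReal.coe_lt_coe_iff.2 (by linarith)

end IsTravelingWave

theorem reproduction_vs_selection_general (γ μ : ℝ) (hγ : γ ∈ Set.Ioo (0 : ℝ) 1)
    (hμ : 0 < μ)
    (g : ℝ → EReal) (v L : ℝ) (hg : IsTravelingWave γ μ g v L) :
    (γ < gammaC μ → ∀ x : ℝ, 0 ≤ g (x - v) → g (x - v) < reprofile γ g x) ∧
    (gammaC μ < γ → ∀ x ∈ Set.Icc (sNext γ μ g) v, reprofile γ g x = g (x - v)) := by
  refine ⟨fun hlt x hx => ?_, fun _ x hx => hg.reprofile_eq hx.1⟩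
  have hxs : x < sNext γ μ g := by
    by_contra! hsx
    have hxv : x ≤ v := by linarith [hg.nonpos_of_nonneg hx]
    exact hlt.not_ge (hg.gammaC_le_of_sNext_le hγ hμ (hsx.trans hxv))
  exact hg.shift_lt_reprofile hμ hxs hx

/-- selection of the luckiest vs. selection of the fittest. If
`γ < γ_c`, the reproduction profile strictly dominates `g₁ = g(· − v)` on the
support of `g₁`; if `γ > γ_c`, they agree on `[s, v]`. -/
theorem reproduction_vs_selection (γ μ : ℝ) (hγ : γ ∈ Set.Ioo (0 : ℝ) 1)
    (hμ : 0 < μ) (hμ1 : μ ≠ 1)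
    (g : ℝ → EReal) (v L : ℝ) (hg : IsTravelingWave γ μ g v L) :
    (γ < gammaC μ → ∀ x : ℝ, 0 ≤ g (x - v) → g (x - v) < reprofile γ g x) ∧
    (gammaC μ < γ → ∀ x ∈ Set.Icc (sNext γ μ g) v, reprofile γ g x = g (x - v)) :=
  reproduction_vs_selection_general γ μ hγ hμ g v L hg
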